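/- Let H be a star hypergraph with sink q. Then the set of G-parking functions of the digraph ←H (restricted to the vertex-side coordinates; the edge-side coordinates are forced to be 0) coincides with the set of H-parking functions of H. -/

import Mathlib

open scoped Classical

def degT {V : Type*} [DecidableEq V] (E : Finset (Finset V)) (T : Finset V) (i : V) : ℕ :=
  (E.filter fun e => i ∈ e ∧ ¬ e ⊆ T).card

def IsHParking {V : Type*} [Fintype V] [DecidableEq V] (E : Finset (Finset V)) (q : V)
    (c : V → ℕ) : Prop :=
  ∀ T : Finset V, T.Nonempty → (∀ i ∈ T, i ≠ q) → ∃ i ∈ T, c i < degT E T i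

def HConnected {V : Type*} (E : Finset (Finset V)) : Prop :=
  ∀ v w : V, Relation.ReflTransGen (fun a b => ∃ e ∈ E, a ∈ e ∧ b ∈ e) v w

/-- `b` is a `G`-parking function for the digraph with (directed) adjacency `Adj`:
every nonempty set `S` of nonsink vertices contains `j` with `b j` less than the
number of directed edges from `j` to the outside of `S`. -/
def IsGParking {W : Type*} [Fintype W] (Adj : W → W → Prop) (q : W) (b : W → ℕ) : Prop :=
  ∀ S : Finset W, S.Nonempty → (∀ j ∈ S, j ≠ q) → ∃ j ∈ S,
    b j < (Finset.univ.filter fun w => Adj j w ∧ w ∉ S).card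

/-- Directed adjacency of the digraph `←H` of a star hypergraph. -/
def starAdj {V : Type*} (E : Finset (Finset V)) (q : V) :
    ({e : Finset V // e ∈ E} ⊕ V) → ({e : Finset V // e ∈ E} ⊕ V) → Prop
  | Sum.inl _, Sum.inr v => v = q
  | Sum.inr v, Sum.inl e => v ∈ e.1 ∧ v ≠ q
  | _, _ => False

/-!
In `←H` an edge vertex `e` has the single out-edge `e → q`, so it passes any test set avoiding
the sink exactly when it carries no chips; if a test set contains no edge vertices, a vertex `i`
sees all `deg i` of its out-edges leave it. Since `q` lies in every hyperedge, a set `T` avoiding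
`q` contains no hyperedge, so `degT E T i = deg i` as well. Hence only singleton tests matter, and
both notions reduce to `b = 0` on edges and `b i < deg i` on nonsink vertices.
-/

section StarHypergraph

variable {V : Type*} (E : Finset (Finset V)) (q : V)

abbrev hdegree [DecidableEq V] (i : V) : ℕ := (E.filter fun e => i ∈ e).card

/- The instance arguments are implicit so that the lemmas rewrite the classical filters
occurring in `IsGParking`. -/
lemma card_starAdj_inl_outside [Fintype V] (e : {e : Finset V // e ∈ E})
    (S : Finset ({e : Finset V // e ∈ E} ⊕ V)) (hq : Sum.inr q ∉ S)
    {_ : DecidablePred fun w => starAdj E q (Sum.inl e) w ∧ w ∉ S} :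
    (Finset.univ.filter fun w => starAdj E q (Sum.inl e) w ∧ w ∉ S).card = 1 := by
  rw [Finset.card_eq_one]
  refine ⟨Sum.inr q, Finset.ext fun w => ?_⟩
  rw [Finset.mem_filter]
  rcases w with e' | v
  · simp [starAdj]
  · simpa [starAdj] using fun h : v = q => h ▸ hq

lemma card_starAdj_inr_outside [Fintype V] [DecidableEq V] {i : V} (hi : i ≠ q)
    (S : Finset ({e : Finset V // e ∈ E} ⊕ V)) (hS : ∀ e, Sum.inl e ∉ S)
    {_ : DecidablePred fun w => starAdj E q (Sum.inr i) w ∧ w ∉ S} :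
    (Finset.univ.filter fun w => starAdj E q (Sum.inr i) w ∧ w ∉ S).card = hdegree E i := by
  have : (Finset.univ.filter fun w => starAdj E q (Sum.inr i) w ∧ w ∉ S)
      = (E.attach.filter fun e => i ∈ e.1).map Function.Embedding.inl := by
    ext w
    rw [Finset.mem_filter]
    rcases w with e | v <;> simp [starAdj, hi, hS]
  rw [this, Finset.card_map, Finset.filter_attach (fun e => i ∈ e) E, Finset.card_map,
    Finset.card_attach]

lemma isGParking_starAdj_iff [Fintype V] [DecidableEq V]
    (b : ({e : Finset V // e ∈ E} ⊕ V) → ℕ) :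
    IsGParking (starAdj E q) (Sum.inr q) b ↔
      (∀ e, b (Sum.inl e) = 0) ∧ ∀ i ≠ q, b (Sum.inr i) < hdegree E i := by
  constructor
  · intro hG
    constructor
    · intro e
      obtain ⟨j, hj, hlt⟩ := hG {Sum.inl e} (Finset.singleton_nonempty _) (by simp)
      rw [Finset.mem_singleton.1 hj, card_starAdj_inl_outside E q e _ (by simp)] at hlt
      omega
    · intro i hi
      obtain ⟨j, hj, hlt⟩ := hG {Sum.inr i} (Finset.singleton_nonempty _) (by simpa using hi)
      rwa [Finset.mem_singleton.1 hj, card_starAdj_inr_outside E q hi _ (by simp)] at hlt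
  · rintro ⟨hedge, hvertex⟩ S ⟨w, hw⟩ hSq
    by_cases hS : ∃ e, Sum.inl e ∈ S
    · obtain ⟨e, he⟩ := hS
      refine ⟨Sum.inl e, he, ?_⟩
      rw [hedge e, card_starAdj_inl_outside E q e S (fun h => hSq _ h rfl)]
      exact Nat.one_pos
    · push Not at hS
      obtain ⟨i, rfl⟩ : ∃ i, w = Sum.inr i := by
        rcases w with e | i
        · exact absurd hw (hS e)
        · exact ⟨i, rfl⟩
      have hi : i ≠ q := fun h => hSq _ hw (h ▸ rfl)
      exact ⟨Sum.inr i, hw, (card_starAdj_inr_outside E q hi S hS).symm ▸ hvertex i hi⟩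

variable {E q}

lemma degT_of_sink_notMem [DecidableEq V] (hstar : ∀ e ∈ E, q ∈ e) {T : Finset V} (hq : q ∉ T)
    (i : V) :
    degT E T i = hdegree E i :=
  congrArg Finset.card <| Finset.filter_congr fun e he =>
    and_iff_left fun hsub => hq (hsub (hstar e he))

lemma isHParking_iff_lt_hdegree [Fintype V] [DecidableEq V] (hstar : ∀ e ∈ E, q ∈ e)
    (c : V → ℕ) :
    IsHParking E q c ↔ ∀ i ≠ q, c i < hdegree E i := by
  constructor
  · intro hH i hi
    obtain ⟨j, hj, hlt⟩ := hH {i} (Finset.singleton_nonempty i) (by simpa using hi)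
    rw [Finset.mem_singleton.1 hj] at hlt
    rwa [degT_of_sink_notMem hstar (by simpa using hi.symm)] at hlt
  · intro hc T ⟨i, hi⟩ hTq
    have hqT : q ∉ T := fun h => hTq q h rfl
    exact ⟨i, hi, (degT_of_sink_notMem hstar hqT i).symm ▸ hc i (hTq i hi)⟩

end StarHypergraph

theorem star_gparking_iff_hparking_general {V : Type*} [Fintype V] [DecidableEq V]
    (E : Finset (Finset V)) (q : V) (hstar : ∀ e ∈ E, q ∈ e)
    (b : ({e : Finset V // e ∈ E} ⊕ V) → ℕ) :
    IsGParking (starAdj E q) (Sum.inr q) b ↔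
      ((∀ e : {e : Finset V // e ∈ E}, b (Sum.inl e) = 0) ∧
        IsHParking E q (fun v => b (Sum.inr v))) := by
  rw [isGParking_starAdj_iff, isHParking_iff_lt_hdegree hstar]

/-- For a star hypergraph `H` with sink `q`, the `G`-parking functions of the digraph `←H`
are exactly the configurations vanishing on the edge-side vertices whose restriction to the
vertex-side coordinates is an `H`-parking function of `H`. -/
theorem star_gparking_iff_hparking {V : Type*} [Fintype V] [DecidableEq V]
    (E : Finset (Finset V)) (q : V) (hconn : HConnected E) (hstar : ∀ e ∈ E, q ∈ e)
    (b : ({e : Finset V // e ∈ E} ⊕ V) → ℕ) :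
    IsGParking (starAdj E q) (Sum.inr q) b ↔
      ((∀ e : {e : Finset V // e ∈ E}, b (Sum.inl e) = 0) ∧
        IsHParking E q (fun v => b (Sum.inr v))) :=
  star_gparking_iff_hparking_general E q hstar b
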